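/- For all n ≥ 5, the spectral radius of K_2 + H' is strictly less than the spectral radius of 2K_1 + C_{n-2}, where H' is the maximal P_3-free linear forest on n-2 vertices (a perfect or near-perfect matching on n-2 vertices). -/

import Mathlib

open SimpleGraph Filter

set_option linter.unusedVariables false

/-- The join of two graphs: disjoint union plus all edges between the two vertex sets. -/
def gjoin {α β : Type*} (G : SimpleGraph α) (H : SimpleGraph β) : SimpleGraph (α ⊕ β) where
  Adj x y :=
    match x, y with
    | Sum.inl a, Sum.inl b => G.Adj a b
    | Sum.inr a, Sum.inr b => H.Adj a b
    | _, _ => True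
  symm := ⟨by rintro (a|a) (b|b) h <;> simp_all <;> exact h.symm⟩
  loopless := ⟨by rintro (a|a) h <;> exact (by simp at h : False)⟩

lemma adjMatrix_isHermitian {V : Type*} [Fintype V] (G : SimpleGraph V)
    [DecidableRel G.Adj] : (G.adjMatrix ℝ).IsHermitian := by
  ext i j
  simp [Matrix.conjTranspose, SimpleGraph.adjMatrix, Matrix.transpose, SimpleGraph.adj_comm]

/-- The spectral radius of a finite graph: the largest eigenvalue of its adjacency matrix. -/
noncomputable def specRad {V : Type*} [Fintype V] [DecidableEq V] (G : SimpleGraph V) : ℝ :=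
  letI := Classical.decRel G.Adj
  ⨆ i, (adjMatrix_isHermitian G).eigenvalues i

/-- `G` contains a copy of `H` (a subgraph isomorphic to `H`). -/
def ContainsCopy {α β : Type*} (H : SimpleGraph α) (G : SimpleGraph β) : Prop :=
  ∃ f : H →g G, Function.Injective f

/-- A linear forest: an acyclic graph with maximum degree at most 2,
i.e. a disjoint union of paths (and isolated vertices). -/
def IsLinearForest {V : Type*} (G : SimpleGraph V) : Prop :=
  G.IsAcyclic ∧ ∀ v, (G.neighborSet v).ncard ≤ 2

/-- The graph on `m` vertices consisting of `⌊m/2⌋` disjoint edges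
(plus one isolated vertex if `m` is odd). -/
def matchingGraph (m : ℕ) : SimpleGraph (Fin m) where
  Adj i j := i ≠ j ∧ (i : ℕ) / 2 = (j : ℕ) / 2
  symm := ⟨fun i j h => ⟨h.1.symm, h.2.symm⟩⟩
  loopless := ⟨fun i h => h.1 rfl⟩

/-- `H` is a minor of `G`, witnessed by connected, pairwise disjoint branch sets. -/
def HasMinor {α β : Type*} (G : SimpleGraph α) (H : SimpleGraph β) : Prop :=
  ∃ f : β → Set α,
    (∀ w, (f w).Nonempty) ∧
    (∀ w, ((G.induce (f w)).Connected)) ∧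
    (Pairwise fun w₁ w₂ => Disjoint (f w₁) (f w₂)) ∧
    (∀ w₁ w₂, H.Adj w₁ w₂ → ∃ u ∈ f w₁, ∃ v ∈ f w₂, G.Adj u v)

/-- A graph is planar iff it has no `K₅`-minor and no `K₃,₃`-minor (Wagner's theorem). -/
def IsPlanar {α : Type*} (G : SimpleGraph α) : Prop :=
  ¬ HasMinor G (completeGraph (Fin 5)) ∧
    ¬ HasMinor G (completeBipartiteGraph (Fin 3) (Fin 3))

/-- The maximum number of edges of an `n`-vertex `H`-free linear forest. -/
noncomputable def exF {m : ℕ} (n : ℕ) (H : SimpleGraph (Fin m)) : ℕ :=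
  sSup {e | ∃ G : SimpleGraph (Fin n),
    IsLinearForest G ∧ ¬ ContainsCopy H G ∧ G.edgeSet.ncard = e}

/-- The disjoint union of paths `P_{k-1}` on `n` vertices (consecutive vertices in each
block of `k-1` are joined). -/
def unionOfPaths (k n : ℕ) : SimpleGraph (Fin n) where
  Adj i j := ((i : ℕ) + 1 = j ∨ (j : ℕ) + 1 = i) ∧ (i : ℕ) / (k - 1) = (j : ℕ) / (k - 1)
  symm := ⟨fun i j h => ⟨h.1.symm, h.2.symm⟩⟩
  loopless := ⟨fun i h => by omega⟩

section SpecRadAux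

open Finset Matrix

lemma eig_le_weight_aux {V : Type*} [Fintype V] [DecidableEq V] {A : Matrix V V ℝ}
    (hA : A.IsHermitian) (hnn : ∀ i j, 0 ≤ A i j) {w : V → ℝ} (hw : ∀ i, 0 < w i) {t : ℝ}
    (hAw : ∀ i, (A *ᵥ w) i ≤ t * w i) (k : V) : hA.eigenvalues k ≤ t := by
  set μ := hA.eigenvalues k with hμ
  set v : V → ℝ := ⇑(hA.eigenvectorBasis k) with hv
  have hAv : A *ᵥ v = μ • v := hA.mulVec_eigenvectorBasis k
  have hvne : v ≠ 0 := by
    have := hA.eigenvectorBasis.orthonormal.ne_zero k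
    intro h
    exact this (by ext j; exact congrFun h j)
  have hS : 0 < ∑ j, (v j)^2 := by
    rcases Function.ne_iff.mp hvne with ⟨j, hj⟩
    have hj' : v j ≠ 0 := by simpa using hj
    exact Finset.sum_pos' (fun i _ => sq_nonneg _)
      ⟨j, Finset.mem_univ j, sq_pos_of_ne_zero hj'⟩
  have hsym : ∀ j l, A j l = A l j := fun j l => by simpa using hA.apply l j
  have key : μ * ∑ j, (v j)^2 ≤ t * ∑ j, (v j)^2 := by
    have h1 : μ * ∑ j, (v j)^2 = ∑ j, ∑ l, A j l * v j * v l := by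
      have hc : ∀ j, (A *ᵥ v) j = μ * v j := fun j => by rw [hAv]; simp
      calc μ * ∑ j, (v j)^2 = ∑ j, v j * (A *ᵥ v) j := by
            rw [Finset.mul_sum]; congr 1; ext j; rw [hc]; ring
        _ = ∑ j, ∑ l, A j l * v j * v l := by
            congr 1; ext j; rw [Matrix.mulVec, dotProduct, Finset.mul_sum]
            congr 1; ext l; ring
    rw [h1]
    set g : V → V → ℝ := fun j l => (A j l * (v j)^2 * w l / w j)/2 with hg
    set g' : V → V → ℝ := fun j l => (A j l * (v l)^2 * w j / w l)/2 with hg'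
    have h2 : ∀ j l, A j l * v j * v l ≤ g j l + g' j l := by
      intro j l
      have hwj := (hw j).ne'
      have hwl := (hw l).ne'
      have key := mul_nonneg (hnn j l) (sq_nonneg (v j * w l - v l * w j))
      have e : g j l + g' j l - A j l * v j * v l
          = (A j l * (v j * w l - v l * w j)^2) / (2 * w j * w l) := by
        rw [hg, hg']; field_simp; ring
      have h3 : 0 ≤ (A j l * (v j * w l - v l * w j)^2) / (2 * w j * w l) :=
        div_nonneg key (by nlinarith [hw j, hw l])
      linarith [e ▸ h3]
    have hrow : ∀ j, ∑ l, g j l = ((v j)^2 / w j) * (A *ᵥ w) j / 2 := by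
      intro j
      rw [Matrix.mulVec, dotProduct, Finset.mul_sum, Finset.sum_div]
      apply Finset.sum_congr rfl; intro l _
      have := (hw j).ne'
      rw [hg]; field_simp
    calc ∑ j, ∑ l, A j l * v j * v l
        ≤ ∑ j, ∑ l, (g j l + g' j l) := by
          exact Finset.sum_le_sum fun j _ => Finset.sum_le_sum fun l _ => h2 j l
      _ = (∑ j, ∑ l, g j l) + ∑ j, ∑ l, g' j l := by
          rw [← Finset.sum_add_distrib]; congr 1; ext j; rw [← Finset.sum_add_distrib]
      _ = (∑ j, ∑ l, g j l) + ∑ j, ∑ l, g j l := by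
          congr 1
          rw [Finset.sum_comm]
          apply Finset.sum_congr rfl; intro j _; apply Finset.sum_congr rfl; intro l _
          show A l j * v j ^ 2 * w l / w j / 2 = A j l * v j ^ 2 * w l / w j / 2
          rw [hsym l j]
      _ = ∑ j, ((v j)^2 / w j) * (A *ᵥ w) j := by
          rw [← Finset.sum_add_distrib]
          apply Finset.sum_congr rfl; intro j _
          rw [hrow j]; ring
      _ ≤ ∑ j, ((v j)^2 / w j) * (t * w j) := by
          apply Finset.sum_le_sum; intro j _
          exact mul_le_mul_of_nonneg_left (hAw j) (div_nonneg (sq_nonneg _) (hw j).le)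
      _ = t * ∑ j, (v j)^2 := by
          rw [Finset.mul_sum]; apply Finset.sum_congr rfl; intro j _
          have := (hw j).ne'
          field_simp
  exact le_of_mul_le_mul_right key hS

lemma rayleigh_le_iSup_aux {V : Type*} [Fintype V] [DecidableEq V] [Nonempty V]
    {A : Matrix V V ℝ} (hA : A.IsHermitian) (x : V → ℝ) :
    ∑ j, ∑ l, A j l * x j * x l ≤ (⨆ i, hA.eigenvalues i) * ∑ j, (x j)^2 := by
  set U : Matrix V V ℝ := (hA.eigenvectorUnitary : Matrix V V ℝ) with hU
  have hspec := hA.spectral_theorem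
  set y : V → ℝ := (star U) *ᵥ x with hy
  have hU2 : U * (star U) = 1 := (Matrix.mem_unitaryGroup_iff).mp hA.eigenvectorUnitary.2
  have hstarT : star U = Uᵀ := by
    rw [Matrix.star_eq_conjTranspose]
    ext i j
    simp [Matrix.conjTranspose_apply]
  have hvm : ∀ z : V → ℝ, z ᵥ* U = star U *ᵥ z := by
    intro z; rw [hstarT, Matrix.mulVec_transpose]
  have hlhs : ∑ j, ∑ l, A j l * x j * x l = x ⬝ᵥ (A *ᵥ x) := by
    rw [dotProduct]
    apply Finset.sum_congr rfl; intro j _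
    rw [Matrix.mulVec, dotProduct, Finset.mul_sum]
    apply Finset.sum_congr rfl; intro l _; ring
  have hdiag : Matrix.diagonal (RCLike.ofReal ∘ hA.eigenvalues : V → ℝ) =
      Matrix.diagonal hA.eigenvalues := by
    congr 1
  have hAx : A *ᵥ x = U *ᵥ (Matrix.diagonal hA.eigenvalues *ᵥ y) := by
    conv_lhs => rw [hspec, Unitary.conjStarAlgAut_apply]
    rw [← Matrix.mulVec_mulVec, ← Matrix.mulVec_mulVec, hdiag, hy, hU]
  have hmain : x ⬝ᵥ (A *ᵥ x) = ∑ j, hA.eigenvalues j * (y j)^2 := by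
    rw [hAx, Matrix.dotProduct_mulVec, hvm, ← hy]
    rw [dotProduct]
    apply Finset.sum_congr rfl; intro j _
    rw [Matrix.mulVec_diagonal]
    ring
  have hnorm : ∑ j, (y j)^2 = ∑ j, (x j)^2 := by
    have h1 : ∑ j, (y j)^2 = y ⬝ᵥ y := by
      rw [dotProduct]; apply Finset.sum_congr rfl; intro j _; ring
    have h2 : y ⬝ᵥ y = x ⬝ᵥ x := by
      rw [hy, hstarT, Matrix.dotProduct_mulVec, Matrix.vecMul_transpose, Matrix.mulVec_mulVec,
        ← hstarT, hU2, Matrix.one_mulVec]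
    rw [h1, h2, dotProduct]
    apply Finset.sum_congr rfl; intro j _; ring
  have hbdd : BddAbove (Set.range hA.eigenvalues) := (Set.finite_range _).bddAbove
  have hle : ∀ j, hA.eigenvalues j ≤ ⨆ i, hA.eigenvalues i := fun j => le_ciSup hbdd j
  calc ∑ j, ∑ l, A j l * x j * x l = ∑ j, hA.eigenvalues j * (y j)^2 := by rw [hlhs, hmain]
    _ ≤ ∑ j, (⨆ i, hA.eigenvalues i) * (y j)^2 := by
        apply Finset.sum_le_sum; intro j _
        exact mul_le_mul_of_nonneg_right (hle j) (sq_nonneg _)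
    _ = (⨆ i, hA.eigenvalues i) * ∑ j, (x j)^2 := by rw [← Finset.mul_sum, hnorm]

@[simp] lemma gjoin_adj_ll {α β : Type*} (G : SimpleGraph α) (H : SimpleGraph β) (a b : α) :
    (gjoin G H).Adj (Sum.inl a) (Sum.inl b) ↔ G.Adj a b := Iff.rfl
@[simp] lemma gjoin_adj_rr {α β : Type*} (G : SimpleGraph α) (H : SimpleGraph β) (a b : β) :
    (gjoin G H).Adj (Sum.inr a) (Sum.inr b) ↔ H.Adj a b := Iff.rfl
lemma gjoin_adj_lr {α β : Type*} (G : SimpleGraph α) (H : SimpleGraph β) (a : α) (b : β) :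
    (gjoin G H).Adj (Sum.inl a) (Sum.inr b) := trivial
lemma gjoin_adj_rl {α β : Type*} (G : SimpleGraph α) (H : SimpleGraph β) (a : β) (b : α) :
    (gjoin G H).Adj (Sum.inr a) (Sum.inl b) := trivial

lemma specRad_le_weight {V : Type*} [Fintype V] [DecidableEq V] [Nonempty V]
    (G : SimpleGraph V) [inst : DecidableRel G.Adj] {w : V → ℝ} (hw : ∀ i, 0 < w i) {t : ℝ}
    (hAw : ∀ i, ((G.adjMatrix ℝ) *ᵥ w) i ≤ t * w i) : specRad G ≤ t := by
  unfold specRad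
  have hadj : (G.adjMatrix ℝ) = @SimpleGraph.adjMatrix ℝ V G (Classical.decRel G.Adj) _ _ := by
    ext i j
    simp only [SimpleGraph.adjMatrix_apply]
    congr 1
  rw [hadj] at hAw
  refine ciSup_le fun k => eig_le_weight_aux _ ?_ hw hAw k
  intro i j
  rw [SimpleGraph.adjMatrix_apply]
  split <;> norm_num

lemma rayleigh_le_specRad {V : Type*} [Fintype V] [DecidableEq V] [Nonempty V]
    (G : SimpleGraph V) [inst : DecidableRel G.Adj] (x : V → ℝ) :
    ∑ j, ∑ l, (G.adjMatrix ℝ) j l * x j * x l ≤ specRad G * ∑ j, (x j)^2 := by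
  unfold specRad
  have hadj : (G.adjMatrix ℝ) = @SimpleGraph.adjMatrix ℝ V G (Classical.decRel G.Adj) _ _ := by
    ext i j
    simp only [SimpleGraph.adjMatrix_apply]
    congr 1
  rw [hadj]
  exact rayleigh_le_iSup_aux _ x

end SpecRadAux

section KeyLemma

open Finset Matrix

lemma key_spec_lt (k : ℕ) :
    specRad (gjoin (completeGraph (Fin 2)) (matchingGraph (k+3))) <
      specRad (gjoin (⊥ : SimpleGraph (Fin 2)) (cycleGraph (k+3))) := by
  set M : ℕ := k + 3 with hMdef
  have hMR : (0:ℝ) < (M:ℝ) := by positivity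
  set s1 := Real.sqrt (2*(M:ℝ)) with hs1def
  set s2 := Real.sqrt (2*(M:ℝ)+1) with hs2def
  have hs1sq : s1^2 = 2*(M:ℝ) := Real.sq_sqrt (by positivity)
  have hs2sq : s2^2 = 2*(M:ℝ)+1 := Real.sq_sqrt (by positivity)
  have hs1pos : 0 < s1 := Real.sqrt_pos.mpr (by positivity)
  have hs2pos : 0 < s2 := Real.sqrt_pos.mpr (by positivity)
  have hs12 : s1 < s2 := Real.sqrt_lt_sqrt (by positivity) (by linarith)
  haveI : Nonempty (Fin 2 ⊕ Fin M) := ⟨Sum.inl 0⟩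
  -- Upper bound for G1
  have hub : specRad (gjoin (completeGraph (Fin 2)) (matchingGraph M)) ≤ 1 + s1 := by
    letI instG : DecidableRel (gjoin (completeGraph (Fin 2)) (matchingGraph M)).Adj :=
      Classical.decRel _
    apply specRad_le_weight (gjoin (completeGraph (Fin 2)) (matchingGraph M))
      (w := Sum.elim (fun _ => s1) (fun _ => (2:ℝ))) (t := 1 + s1)
    · rintro (a|c)
      · simpa using hs1pos
      · norm_num
    · rintro (a|c)
      · -- row (inl a)
        rw [Matrix.mulVec, dotProduct, Fintype.sum_sum_type]
        simp only [SimpleGraph.adjMatrix_apply, Sum.elim_inl, Sum.elim_inr]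
        have h1 : ∑ b : Fin 2,
            (if (gjoin (completeGraph (Fin 2)) (matchingGraph M)).Adj (Sum.inl a) (Sum.inl b)
              then (1:ℝ) else 0) * s1 = s1 := by
          rw [Fin.sum_univ_two]
          fin_cases a
          · rw [if_neg (by simp [completeGraph]), if_pos (by simp [completeGraph])]
            ring
          · rw [if_pos (by simp [completeGraph]), if_neg (by simp [completeGraph])]
            ring
        have h2 : ∑ c : Fin M,
            (if (gjoin (completeGraph (Fin 2)) (matchingGraph M)).Adj (Sum.inl a) (Sum.inr c)
              then (1:ℝ) else 0) * 2 = 2 * (M:ℝ) := by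
          rw [Finset.sum_congr rfl
            (fun c _ => by rw [if_pos (gjoin_adj_lr _ _ _ _), one_mul] :
              ∀ c ∈ Finset.univ, _ = (2:ℝ))]
          simp [mul_comm]
        rw [h1, h2]
        nlinarith [hs1sq]
      · -- row (inr c)
        rw [Matrix.mulVec, dotProduct, Fintype.sum_sum_type]
        simp only [SimpleGraph.adjMatrix_apply, Sum.elim_inl, Sum.elim_inr]
        have h1 : ∑ b : Fin 2,
            (if (gjoin (completeGraph (Fin 2)) (matchingGraph M)).Adj (Sum.inr c) (Sum.inl b)
              then (1:ℝ) else 0) * s1 = 2 * s1 := by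
          rw [Fin.sum_univ_two, if_pos (gjoin_adj_rl _ _ _ _), if_pos (gjoin_adj_rl _ _ _ _)]
          ring
        have h2 : ∑ d : Fin M,
            (if (gjoin (completeGraph (Fin 2)) (matchingGraph M)).Adj (Sum.inr c) (Sum.inr d)
              then (1:ℝ) else 0) * 2 ≤ 2 := by
          have hcard : (Finset.univ.filter
              (fun d => (gjoin (completeGraph (Fin 2)) (matchingGraph M)).Adj
                (Sum.inr c) (Sum.inr d))).card ≤ 1 := by
            apply Finset.card_le_one.mpr
            intro d hd d' hd'
            rw [Finset.mem_filter] at hd hd'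
            have h1 := (gjoin_adj_rr _ _ _ _).mp hd.2
            have h2 := (gjoin_adj_rr _ _ _ _).mp hd'.2
            obtain ⟨hne1, hdiv1⟩ := h1
            obtain ⟨hne2, hdiv2⟩ := h2
            have hv1 : (c:ℕ) ≠ (d:ℕ) := fun h => hne1 (Fin.ext h)
            have hv2 : (c:ℕ) ≠ (d':ℕ) := fun h => hne2 (Fin.ext h)
            exact Fin.ext (by omega)
          calc ∑ d : Fin M,
              (if (gjoin (completeGraph (Fin 2)) (matchingGraph M)).Adj (Sum.inr c) (Sum.inr d)
                then (1:ℝ) else 0) * 2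
              = 2 * ∑ d : Fin M,
                (if (gjoin (completeGraph (Fin 2)) (matchingGraph M)).Adj (Sum.inr c) (Sum.inr d)
                  then (1:ℝ) else 0) := by rw [Finset.mul_sum]; exact Finset.sum_congr rfl fun d _ => by ring
            _ = 2 * ((Finset.univ.filter
                (fun d => (gjoin (completeGraph (Fin 2)) (matchingGraph M)).Adj
                  (Sum.inr c) (Sum.inr d))).card : ℝ) := by rw [Finset.sum_boole]
            _ ≤ 2 * 1 := by
                have : ((Finset.univ.filter
                    (fun d => (gjoin (completeGraph (Fin 2)) (matchingGraph M)).Adj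
                      (Sum.inr c) (Sum.inr d))).card : ℝ) ≤ 1 := by
                  exact_mod_cast Nat.cast_le.mpr hcard
                linarith
            _ = 2 := by ring
        calc (∑ b : Fin 2, _) + (∑ d : Fin M, _) ≤ 2 * s1 + 2 := by rw [h1]; linarith [h2]
          _ = (1 + s1) * 2 := by ring
  -- Lower bound for G2
  have hlb : 1 + s2 ≤ specRad (gjoin (⊥ : SimpleGraph (Fin 2)) (cycleGraph M)) := by
    letI instG2 : DecidableRel (gjoin (⊥ : SimpleGraph (Fin 2)) (cycleGraph M)).Adj :=
      Classical.decRel _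
    set L : ℝ := 1 + s2 with hLdef
    have hLpos : 0 < L := by positivity
    set p : ℝ := (M:ℝ) / L with hpdef
    have hppos : 0 < p := by positivity
    set x : Fin 2 ⊕ Fin M → ℝ := Sum.elim (fun _ => p) (fun _ => (1:ℝ)) with hxdef
    have hray := rayleigh_le_specRad (gjoin (⊥ : SimpleGraph (Fin 2)) (cycleGraph M)) x
    have hx2 : ∑ j, (x j)^2 = 2*p^2 + (M:ℝ) := by
      rw [Fintype.sum_sum_type]
      simp [hxdef, Finset.sum_const]
    -- cycle row sum
    have hcycrow : ∀ c : Fin M, ∑ d : Fin M,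
        (if (gjoin (⊥ : SimpleGraph (Fin 2)) (cycleGraph M)).Adj (Sum.inr c) (Sum.inr d)
          then (1:ℝ) else 0) = 2 := by
      intro c
      rw [Finset.sum_boole]
      have hfilt : Finset.univ.filter
          (fun d => (gjoin (⊥ : SimpleGraph (Fin 2)) (cycleGraph M)).Adj (Sum.inr c) (Sum.inr d))
          = {c - 1, c + 1} := by
        ext d
        simp only [Finset.mem_filter, Finset.mem_univ, true_and, gjoin_adj_rr,
          Finset.mem_insert, Finset.mem_singleton]
        rw [SimpleGraph.cycleGraph_adj]
        constructor
        · rintro (h|h)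
          · left
            have := sub_sub_cancel c d
            rw [h] at this
            exact this.symm
          · right
            rw [sub_eq_iff_eq_add] at h
            rw [h, add_comm]
        · rintro (h|h)
          · left
            rw [h, sub_sub_cancel]
          · right
            rw [h]
            simp
      rw [hfilt]
      have hne : (c - 1 : Fin M) ≠ c + 1 := by
        intro h
        have h1 : c = c + (1 + 1) := by rw [← add_assoc, ← h, sub_add_cancel]
        have h2 : ((1:Fin M) + 1) = 0 := left_eq_add.mp h1
        have h3 : (((1:Fin M) + 1)).val = 0 := congrArg Fin.val h2
        rw [Fin.val_add, Fin.val_one] at h3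
        rw [Nat.mod_eq_of_lt (by omega)] at h3
        omega
      rw [Finset.card_pair hne]
      norm_num
    -- compute the Rayleigh sum
    have hsum : ∑ j, ∑ l,
        ((gjoin (⊥ : SimpleGraph (Fin 2)) (cycleGraph M)).adjMatrix ℝ) j l * x j * x l
        = 4*(M:ℝ)*p + 2*(M:ℝ) := by
      rw [Fintype.sum_sum_type]
      have hrowL : ∀ a : Fin 2, ∑ l,
          ((gjoin (⊥ : SimpleGraph (Fin 2)) (cycleGraph M)).adjMatrix ℝ) (Sum.inl a) l
            * x (Sum.inl a) * x l = (M:ℝ) * p := by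
        intro a
        rw [Fintype.sum_sum_type]
        have hll : ∑ b : Fin 2,
            ((gjoin (⊥ : SimpleGraph (Fin 2)) (cycleGraph M)).adjMatrix ℝ) (Sum.inl a) (Sum.inl b)
              * x (Sum.inl a) * x (Sum.inl b) = 0 := by
          apply Finset.sum_eq_zero
          intro b _
          rw [SimpleGraph.adjMatrix_apply, if_neg (by simp)]
          ring
        have hlr : ∑ c : Fin M,
            ((gjoin (⊥ : SimpleGraph (Fin 2)) (cycleGraph M)).adjMatrix ℝ) (Sum.inl a) (Sum.inr c)
              * x (Sum.inl a) * x (Sum.inr c) = (M:ℝ) * p := by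
          rw [Finset.sum_congr rfl (fun c _ => by
            rw [SimpleGraph.adjMatrix_apply, if_pos (gjoin_adj_lr _ _ _ _)]
            simp [hxdef] : ∀ c ∈ Finset.univ, _ = p)]
          simp [mul_comm]
        rw [hll, hlr, zero_add]
      have hrowR : ∀ c : Fin M, ∑ l,
          ((gjoin (⊥ : SimpleGraph (Fin 2)) (cycleGraph M)).adjMatrix ℝ) (Sum.inr c) l
            * x (Sum.inr c) * x l = 2*p + 2 := by
        intro c
        rw [Fintype.sum_sum_type]
        have hrl : ∑ b : Fin 2,
            ((gjoin (⊥ : SimpleGraph (Fin 2)) (cycleGraph M)).adjMatrix ℝ) (Sum.inr c) (Sum.inl b)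
              * x (Sum.inr c) * x (Sum.inl b) = 2*p := by
          rw [Fin.sum_univ_two]
          rw [SimpleGraph.adjMatrix_apply, SimpleGraph.adjMatrix_apply,
            if_pos (gjoin_adj_rl _ _ _ _), if_pos (gjoin_adj_rl _ _ _ _)]
          simp [hxdef]
          ring
        have hrr : ∑ d : Fin M,
            ((gjoin (⊥ : SimpleGraph (Fin 2)) (cycleGraph M)).adjMatrix ℝ) (Sum.inr c) (Sum.inr d)
              * x (Sum.inr c) * x (Sum.inr d) = 2 := by
          rw [Finset.sum_congr rfl (fun d _ => by
            rw [SimpleGraph.adjMatrix_apply]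
            simp [hxdef] : ∀ d ∈ Finset.univ, _ = if (gjoin (⊥ : SimpleGraph (Fin 2)) (cycleGraph M)).Adj (Sum.inr c) (Sum.inr d) then (1:ℝ) else 0)]
          exact hcycrow c
        rw [hrl, hrr]
      rw [Finset.sum_congr rfl (fun a _ => hrowL a), Finset.sum_congr rfl (fun c _ => hrowR c)]
      simp [Finset.sum_const]
      push_cast
      ring
    rw [hsum, hx2] at hray
    have hpL : p * L = (M:ℝ) := by rw [hpdef]; field_simp
    have hL2 : L^2 = 2*L + 2*(M:ℝ) := by rw [hLdef]; nlinarith [hs2sq]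
    have hLeq : L * (2*p^2 + (M:ℝ)) = 4*(M:ℝ)*p + 2*(M:ℝ) := by
      linear_combination (2*p - L + 2) * hpL + p * hL2
    have hx2pos : (0:ℝ) < 2*p^2 + (M:ℝ) := by positivity
    have := hLeq ▸ hray
    exact le_of_mul_le_mul_right this hx2pos
  calc specRad (gjoin (completeGraph (Fin 2)) (matchingGraph M)) ≤ 1 + s1 := hub
    _ < 1 + s2 := by linarith
    _ ≤ specRad (gjoin (⊥ : SimpleGraph (Fin 2)) (cycleGraph M)) := hlb

end KeyLemma

/-- For `n ≥ 5`, `λ(K₂ + H') < λ(2K₁ + C_{n-2})` where `H'` is the maximal `P₃`-free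
linear forest on `n-2` vertices (a perfect or near-perfect matching). -/
theorem K2_join_matching_lt_2K1_join_cycle (n : ℕ) (hn : 5 ≤ n) :
    specRad (gjoin (completeGraph (Fin 2)) (matchingGraph (n - 2))) <
      specRad (gjoin (⊥ : SimpleGraph (Fin 2)) (cycleGraph (n - 2))) := by
  have h : ∃ k, n - 2 = k + 3 := ⟨n - 5, by omega⟩
  obtain ⟨k, hk⟩ := h
  rw [hk]
  exact key_spec_lt k
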